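/- arXiv:1407.7604 — 2 statements merged into one kernel-verified Lean document; each statement's English description precedes it below -/
import Mathlib

section
/- Let G be a finite simple connected graph with maximum degree at most 4, not isomorphic to C_{2,5}, such that ν_s(G) < n(G)/9 and every induced subgraph G' of G on a proper subset of the vertices satisfies ν_s(G') ≥ (n(G') − i(G'))/9. Then no two distinct end-vertices of G have a common neighbor. -/
open SimpleGraph

/-- An induced matching of a simple graph `G`: a set of edges of `G` such that no two
distinct edges share an endpoint, and no edge of `G` joins an endpoint of one edge of
the matching to an endpoint of another. -/
def IsInducedMatching {V : Type*} (G : SimpleGraph V) (M : Finset (Sym2 V)) : Prop :=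
  (↑M : Set (Sym2 V)) ⊆ G.edgeSet ∧
    ∀ e ∈ M, ∀ f ∈ M, e ≠ f → ∀ a ∈ e, ∀ b ∈ f, a ≠ b ∧ ¬ G.Adj a b

/-- The strong matching number `ν_s(G)`: the maximum size of an induced matching of `G`. -/
noncomputable def strongMatchingNumber {V : Type*} [Fintype V] (G : SimpleGraph V) : ℕ :=
  sSup {n : ℕ | ∃ M : Finset (Sym2 V), IsInducedMatching G M ∧ M.card = n}

/-- The number of isolated vertices of `G`. -/
noncomputable def isolatedCount {V : Type*} [Fintype V] (G : SimpleGraph V) : ℕ :=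
  Set.ncard {v : V | ∀ w, ¬ G.Adj v w}

/-- The graph `C_{2,5}` obtained from the 5-cycle by replacing each vertex with two
nonadjacent vertices; two vertices in different pairs are adjacent iff the corresponding
vertices of `C_5` are adjacent. -/
def C25 : SimpleGraph (Fin 5 × Fin 2) where
  Adj x y := x.1 + 1 = y.1 ∨ y.1 + 1 = x.1
  symm := ⟨fun _ _ h => Or.symm h⟩
  loopless := ⟨by intro x; revert x; decide⟩

/-!
Write `I(y)` for the set of vertices that become isolated when the closed neighbourhood `N[y]` is
deleted. If `u` is an end-vertex at `y`, an induced matching of `G - N[y]` extends by the edge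
`yu`, so minimality applied to `G - N[y]` gives `deg y + |I(y)| ≥ 9`; in particular
`|I(y)| ≥ 5`, and all neighbours of `I(y)` lie in `N(y)`.

Suppose `v` has two end-neighbours. Each other neighbour of `v` sees at most three vertices of
`I(v)`, so `v` has exactly two further neighbours `x₁, x₂`, and these are the only neighbours of
vertices of `I(v)`. Since `x₂` sees at most three of the at least five vertices of `I(v)`, some
vertex of `I(v)` is an end-vertex at `x₁`, and symmetrically. Every vertex of `I(x₁)` is then
reached through a neighbour of `x₁` outside `I(v)` (otherwise it would be `x₂`, which has an
end-neighbour outside `N[x₁]`), and each such neighbour sees at most three of them; hence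
`9 ≤ deg x₁ + 3 (deg x₁ - c₁)` with `c₁ = |N(x₁) ∩ I(v)|`, i.e. `c₁ ≤ 2`. Likewise `c₂ ≤ 2`,
contradicting `|I(v)| ≤ c₁ + c₂`.
-/

section InducedMatching

variable {V : Type*}

lemma isInducedMatching_empty (G : SimpleGraph V) : IsInducedMatching G ∅ := by
  simp [IsInducedMatching]

lemma IsInducedMatching.card_le_strongMatchingNumber [Fintype V] {G : SimpleGraph V}
    {M : Finset (Sym2 V)} (hM : IsInducedMatching G M) : M.card ≤ strongMatchingNumber G :=
  le_csSup ⟨Fintype.card (Sym2 V), by rintro n ⟨N, -, rfl⟩; exact N.card_le_univ⟩ ⟨M, hM, rfl⟩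

lemma exists_isInducedMatching_card_eq_strongMatchingNumber [Fintype V] (G : SimpleGraph V) :
    ∃ M : Finset (Sym2 V), IsInducedMatching G M ∧ M.card = strongMatchingNumber G :=
  Nat.sSup_mem (s := {n | ∃ M : Finset (Sym2 V), IsInducedMatching G M ∧ M.card = n})
    ⟨0, ∅, isInducedMatching_empty G, rfl⟩
    ⟨Fintype.card (Sym2 V), by rintro n ⟨N, -, rfl⟩; exact N.card_le_univ⟩

lemma IsInducedMatching.map {W : Type*} {G' : SimpleGraph W} {G : SimpleGraph V} (f : G' ↪g G)
    {M : Finset (Sym2 W)} (hM : IsInducedMatching G' M) :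
    IsInducedMatching G (M.map f.toEmbedding.sym2Map) := by
  refine ⟨?_, ?_⟩
  · intro e he
    obtain ⟨e, he', rfl⟩ := Finset.mem_map.mp he
    induction e using Sym2.ind with
    | _ a b => simpa using hM.1 he'
  · intro _ he _ hg heg _ ha _ hb
    obtain ⟨e, heM, rfl⟩ := Finset.mem_map.mp he
    obtain ⟨g, hgM, rfl⟩ := Finset.mem_map.mp hg
    obtain ⟨a, ha', rfl⟩ := Sym2.mem_map.mp ha
    obtain ⟨b, hb', rfl⟩ := Sym2.mem_map.mp hb
    simpa using hM.2 e heM g hgM (fun h => heg (h ▸ rfl)) a ha' b hb'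

lemma IsInducedMatching.insert [DecidableEq V] {G : SimpleGraph V} {M : Finset (Sym2 V)}
    (hM : IsInducedMatching G M) {e : Sym2 V} (he : e ∈ G.edgeSet)
    (hsep : ∀ a ∈ e, ∀ f ∈ M, ∀ b ∈ f, a ≠ b ∧ ¬ G.Adj a b) :
    IsInducedMatching G (insert e M) := by
  refine ⟨?_, ?_⟩
  · simpa [Set.insert_subset_iff] using ⟨he, hM.1⟩
  · intro f hf g hg hfg a ha b hb
    rcases Finset.mem_insert.mp hf with rfl | hfM <;>
      rcases Finset.mem_insert.mp hg with rfl | hgM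
    · exact absurd rfl hfg
    · exact hsep a ha g hgM b hb
    · exact (hsep b hb f hfM a ha).imp Ne.symm (fun h h' => h h'.symm)
    · exact hM.2 f hfM g hgM hfg a ha b hb

lemma strongMatchingNumber_induce_add_one_le [Fintype V] {G : SimpleGraph V} {y u : V}
    (hyu : G.Adj y u) {S : Finset V} (hS : ∀ a ∈ s(y, u), ∀ w ∈ S, a ≠ w ∧ ¬ G.Adj a w) :
    strongMatchingNumber (G.induce (S : Set V)) + 1 ≤ strongMatchingNumber G := by
  classical
  obtain ⟨M, hM, hcard⟩ :=
    exists_isInducedMatching_card_eq_strongMatchingNumber (G.induce (S : Set V))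
  set N := M.map (Embedding.induce (S : Set V)).toEmbedding.sym2Map
  have hsep : ∀ a ∈ s(y, u), ∀ f ∈ N, ∀ b ∈ f, a ≠ b ∧ ¬ G.Adj a b := by
    intro a ha f hf b hb
    obtain ⟨f, -, rfl⟩ := Finset.mem_map.mp hf
    obtain ⟨b, -, rfl⟩ := Sym2.mem_map.mp hb
    exact hS a ha b b.2
  have hyuN : s(y, u) ∉ N := fun h =>
    (hsep y (Sym2.mem_mk_left y u) _ h y (Sym2.mem_mk_left y u)).1 rfl
  have := ((hM.map (Embedding.induce (S : Set V))).insert hyu hsep).card_le_strongMatchingNumber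
  rwa [Finset.card_insert_of_notMem hyuN, Finset.card_map, hcard] at this

end InducedMatching

namespace SimpleGraph

variable {V : Type*}

section Neighborhoods

variable [Fintype V] [DecidableEq V] (G : SimpleGraph V) [DecidableRel G.Adj]

def closedNeighborFinset (y : V) : Finset V := insert y (G.neighborFinset y)

def isolatedFinset (S : Finset V) : Finset V := S.filter fun w => ∀ z ∈ S, ¬ G.Adj w z

variable {G}

lemma mem_closedNeighborFinset {y w : V} : w ∈ G.closedNeighborFinset y ↔ w = y ∨ G.Adj y w := by
  simp [closedNeighborFinset]

lemma card_closedNeighborFinset (y : V) : (G.closedNeighborFinset y).card = G.degree y + 1 := by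
  rw [closedNeighborFinset, Finset.card_insert_of_notMem (G.notMem_neighborFinset_self y),
    card_neighborFinset_eq_degree]

lemma isolatedCount_induce (S : Finset V) :
    isolatedCount (G.induce (S : Set V)) = (G.isolatedFinset S).card := by
  rw [isolatedCount, ← Set.ncard_image_of_injective _ Subtype.val_injective,
    ← Set.ncard_coe_finset]
  congr 1
  ext w
  simp [isolatedFinset, and_comm]

lemma mem_isolatedFinset_compl_closedNeighborFinset {y w : V} :
    w ∈ G.isolatedFinset (G.closedNeighborFinset y)ᶜ ↔
      w ∉ G.closedNeighborFinset y ∧ ∀ z, G.Adj w z → z ∈ G.closedNeighborFinset y := by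
  simp only [isolatedFinset, Finset.mem_filter, Finset.mem_compl]
  exact and_congr_right fun _ => forall_congr' fun z => by tauto

lemma adj_of_mem_isolatedFinset_of_adj {y w z : V}
    (hw : w ∈ G.isolatedFinset (G.closedNeighborFinset y)ᶜ) (hwz : G.Adj w z) : G.Adj y z := by
  rw [mem_isolatedFinset_compl_closedNeighborFinset, mem_closedNeighborFinset] at hw
  obtain ⟨hwy, hN⟩ := hw
  rcases mem_closedNeighborFinset.mp (hN z hwz) with rfl | hyz
  · exact absurd (Or.inr hwz.symm) hwy
  · exact hyz

lemma self_notMem_isolatedFinset_compl_closedNeighborFinset (y : V) :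
    y ∉ G.isolatedFinset (G.closedNeighborFinset y)ᶜ := by
  simp [mem_isolatedFinset_compl_closedNeighborFinset, mem_closedNeighborFinset]

lemma card_neighborFinset_inter_lt_degree {x v : V} {A : Finset V} (hxv : G.Adj x v)
    (hv : v ∉ A) : (G.neighborFinset x ∩ A).card < G.degree x := by
  rw [← card_neighborFinset_eq_degree]
  refine Finset.card_lt_card ((Finset.ssubset_iff_of_subset Finset.inter_subset_left).mpr ?_)
  exact ⟨v, (G.mem_neighborFinset _ _).mpr hxv, fun h => hv (Finset.mem_inter.mp h).2⟩

lemma card_le_mul_card_of_forall_exists_adj {A B : Finset V} {k : ℕ}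
    (hA : ∀ a ∈ A, ∃ b ∈ B, G.Adj a b) (hB : ∀ b ∈ B, (G.neighborFinset b ∩ A).card ≤ k) :
    A.card ≤ k * B.card :=
  calc A.card ≤ (B.biUnion fun b => G.neighborFinset b ∩ A).card := by
        refine Finset.card_le_card fun a ha => ?_
        obtain ⟨b, hb, hab⟩ := hA a ha
        simpa using ⟨b, hb, hab.symm, ha⟩
    _ ≤ ∑ b ∈ B, (G.neighborFinset b ∩ A).card := Finset.card_biUnion_le
    _ ≤ ∑ _b ∈ B, k := Finset.sum_le_sum hB
    _ = k * B.card := by rw [Finset.sum_const, smul_eq_mul, mul_comm]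

lemma card_le_card_neighborFinset_inter_add {A : Finset V} {x₁ x₂ : V}
    (hadj : ∀ w, ∃ z, G.Adj w z) (hA : ∀ w ∈ A, ∀ z, G.Adj w z → z = x₁ ∨ z = x₂) :
    A.card ≤ (G.neighborFinset x₁ ∩ A).card + (G.neighborFinset x₂ ∩ A).card := by
  refine (Finset.card_le_card fun w hw => ?_).trans (Finset.card_union_le _ _)
  obtain ⟨z, hwz⟩ := hadj w
  rcases hA w hw z hwz with rfl | rfl <;> simp [hw, hwz.symm]

lemma exists_adj_forall_adj_eq_of_card_lt {A : Finset V} {x₁ x₂ : V}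
    (hadj : ∀ w, ∃ z, G.Adj w z) (hA : ∀ w ∈ A, ∀ z, G.Adj w z → z = x₁ ∨ z = x₂)
    (hcard : (G.neighborFinset x₂ ∩ A).card < A.card) :
    ∃ w ∈ A, G.Adj x₁ w ∧ ∀ z, G.Adj w z → z = x₁ := by
  obtain ⟨w, hwA, hw⟩ := Finset.exists_mem_notMem_of_card_lt_card hcard
  have hwx₁ : ∀ z, G.Adj w z → z = x₁ := fun z hwz =>
    (hA w hwA z hwz).resolve_right (by rintro rfl; exact hw (by simp [hwA, hwz.symm]))
  obtain ⟨z, hwz⟩ := hadj w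
  exact ⟨w, hwA, (hwx₁ z hwz ▸ hwz).symm, hwx₁⟩

end Neighborhoods

section MinimalCounterexample

variable [Fintype V] [DecidableEq V] {G : SimpleGraph V} [DecidableRel G.Adj]

theorem nine_le_degree_add_card_isolatedFinset
    (hsmall : (strongMatchingNumber G : ℚ) < (Fintype.card V : ℚ) / 9)
    (hmin : ∀ s : Finset V, s ⊂ Finset.univ →
      ((s.card : ℚ) - (isolatedCount (G.induce (↑s : Set V)) : ℚ)) / 9 ≤
        strongMatchingNumber (G.induce (↑s : Set V)))
    {y u : V} (hyu : G.Adj y u) (hu : ∀ z, G.Adj u z → z = y) :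
    9 ≤ G.degree y + (G.isolatedFinset (G.closedNeighborFinset y)ᶜ).card := by
  set S := (G.closedNeighborFinset y)ᶜ
  have hS : S ⊂ Finset.univ := Finset.ssubset_univ_iff.mpr fun h =>
    (Finset.mem_compl.mp (h ▸ Finset.mem_univ y)) (mem_closedNeighborFinset.mpr (Or.inl rfl))
  have hcard : S.card + (G.degree y + 1) = Fintype.card V := by
    rw [← card_closedNeighborFinset, Finset.card_compl_add_card]
  have hsep : ∀ a ∈ s(y, u), ∀ w ∈ S, a ≠ w ∧ ¬ G.Adj a w := by
    intro a ha w hw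
    simp only [S, Finset.mem_compl, mem_closedNeighborFinset, not_or] at hw
    rcases Sym2.mem_iff.mp ha with rfl | rfl
    · exact ⟨Ne.symm hw.1, hw.2⟩
    · exact ⟨fun h => hw.2 (h ▸ hyu), fun h => hw.1 (hu w h)⟩
  have hlift := strongMatchingNumber_induce_add_one_le hyu hsep
  have hS9 := hmin S hS
  rw [isolatedCount_induce] at hS9
  qify at hcard hlift
  have : (8 : ℚ) < G.degree y + (G.isolatedFinset S).card := by linarith
  exact_mod_cast this

lemma exists_pair_of_two_end_neighbors
    (hdeg : ∀ v, G.degree v ≤ 4) (hadj : ∀ w, ∃ z, G.Adj w z) {v u₁ u₂ : V} (hne : u₁ ≠ u₂)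
    (hvu₁ : G.Adj v u₁) (hvu₂ : G.Adj v u₂)
    (hu₁ : ∀ z, G.Adj u₁ z → z = v) (hu₂ : ∀ z, G.Adj u₂ z → z = v)
    (hnine : 9 ≤ G.degree v + (G.isolatedFinset (G.closedNeighborFinset v)ᶜ).card) :
    ∃ x₁ x₂, x₁ ≠ x₂ ∧ G.Adj v x₁ ∧ G.Adj v x₂ ∧
      ∀ w ∈ G.isolatedFinset (G.closedNeighborFinset v)ᶜ, ∀ z, G.Adj w z → z = x₁ ∨ z = x₂ := by
  set H := G.isolatedFinset (G.closedNeighborFinset v)ᶜ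
  set X := ((G.neighborFinset v).erase u₁).erase u₂
  have hX : ∀ x ∈ X, G.Adj v x := fun x hx => by
    simp only [X, Finset.mem_erase, mem_neighborFinset] at hx
    exact hx.2.2
  have hHX : ∀ w ∈ H, ∀ z, G.Adj w z → z ∈ X := by
    intro w hw z hwz
    have hwv : w ≠ v := fun h => self_notMem_isolatedFinset_compl_closedNeighborFinset v (h ▸ hw)
    simp only [X, Finset.mem_erase, mem_neighborFinset]
    exact ⟨fun h => hwv (hu₂ w (h ▸ hwz.symm)), fun h => hwv (hu₁ w (h ▸ hwz.symm)),
      adj_of_mem_isolatedFinset_of_adj hw hwz⟩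
  have hHcard : H.card ≤ 3 * X.card := by
    refine card_le_mul_card_of_forall_exists_adj
      (fun w hw => (hadj w).imp fun z hwz => ⟨hHX w hw z hwz, hwz⟩) fun x hx => ?_
    exact Nat.le_of_lt_succ ((card_neighborFinset_inter_lt_degree (hX x hx).symm
      (self_notMem_isolatedFinset_compl_closedNeighborFinset v)).trans_le (hdeg x))
  have hXcard : X.card = G.degree v - 1 - 1 := by
    rw [Finset.card_erase_of_mem (by simp [hne.symm, hvu₂]),
      Finset.card_erase_of_mem (by simpa using hvu₁), card_neighborFinset_eq_degree]
  obtain ⟨x₁, x₂, hx, hX₁₂⟩ := Finset.card_eq_two.mp (show X.card = 2 by have := hdeg v; omega)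
  refine ⟨x₁, x₂, hx, hX x₁ (by simp [hX₁₂]), hX x₂ (by simp [hX₁₂]), fun w hw z hwz => ?_⟩
  simpa [hX₁₂] using hHX w hw z hwz

lemma card_neighborFinset_inter_le_two
    (hdeg : ∀ v, G.degree v ≤ 4) (hadj : ∀ w, ∃ z, G.Adj w z)
    (hnine : ∀ y u, G.Adj y u → (∀ z, G.Adj u z → z = y) →
      9 ≤ G.degree y + (G.isolatedFinset (G.closedNeighborFinset y)ᶜ).card)
    {A : Finset V} {x x' : V} (hxx' : x ≠ x') (hA : ∀ w ∈ A, ∀ z, G.Adj w z → z = x ∨ z = x')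
    (hx : (G.neighborFinset x ∩ A).card < A.card) (hx' : (G.neighborFinset x' ∩ A).card < A.card) :
    (G.neighborFinset x ∩ A).card ≤ 2 := by
  obtain ⟨w, -, hxw, hw⟩ := exists_adj_forall_adj_eq_of_card_lt hadj hA hx'
  obtain ⟨w', -, hx'w', hw'⟩ :=
    exists_adj_forall_adj_eq_of_card_lt hadj (fun a ha z hz => (hA a ha z hz).symm) hx
  set H := G.isolatedFinset (G.closedNeighborFinset x)ᶜ
  have hxH : x ∉ H := self_notMem_isolatedFinset_compl_closedNeighborFinset x
  have hx'H : x' ∉ H := fun h => hxx' (hw' x (adj_of_mem_isolatedFinset_of_adj h hx'w').symm)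
  have hcover : ∀ a ∈ H, ∃ b ∈ G.neighborFinset x \ A, G.Adj a b := by
    intro a ha
    obtain ⟨b, hab⟩ := hadj a
    refine ⟨b, Finset.mem_sdiff.mpr ⟨(G.mem_neighborFinset _ _).mpr
      (adj_of_mem_isolatedFinset_of_adj ha hab), fun hb => ?_⟩, hab⟩
    rcases hA b hb a hab.symm with rfl | rfl
    · exact hxH ha
    · exact hx'H ha
  have hH : H.card ≤ 3 * (G.neighborFinset x \ A).card :=
    card_le_mul_card_of_forall_exists_adj hcover fun b hb =>
      have hbx := ((G.mem_neighborFinset _ _).mp (Finset.mem_sdiff.mp hb).1).symm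
      Nat.le_of_lt_succ ((card_neighborFinset_inter_lt_degree hbx hxH).trans_le (hdeg b))
  have hsdiff : (G.neighborFinset x \ A).card = G.degree x - (G.neighborFinset x ∩ A).card := by
    rw [Finset.card_sdiff, Finset.inter_comm, card_neighborFinset_eq_degree]
  have hkx : 9 ≤ G.degree x + H.card := hnine x w hxw hw
  have := hdeg x
  omega

end MinimalCounterexample

end SimpleGraph

theorem claim2_no_two_endvertices_share_neighbor_general
    {V : Type*} [Fintype V] (G : SimpleGraph V) [DecidableRel G.Adj]
    (hconn : G.Connected) (hdeg : ∀ v, G.degree v ≤ 4)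
    (hsmall : (strongMatchingNumber G : ℚ) < (Fintype.card V : ℚ) / 9)
    (hmin : ∀ s : Finset V, s ⊂ Finset.univ →
      ((s.card : ℚ) - (isolatedCount (G.induce (↑s : Set V)) : ℚ)) / 9 ≤
        strongMatchingNumber (G.induce (↑s : Set V))) :
    ∀ u₁ u₂ v : V, u₁ ≠ u₂ → G.degree u₁ = 1 → G.degree u₂ = 1 →
      G.Adj v u₁ → G.Adj v u₂ → False := by
  classical
  intro u₁ u₂ v hne hd₁ hd₂ hvu₁ hvu₂
  have : Nontrivial V := ⟨u₁, u₂, hne⟩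
  have hadj : ∀ w, ∃ z, G.Adj w z := fun w =>
    exists_adj_iff_not_isIsolated.mpr (hconn.preconnected.not_isIsolated w)
  have hnine := fun y u (hyu : G.Adj y u) => nine_le_degree_add_card_isolatedFinset hsmall hmin hyu
  have hu₁ : ∀ z, G.Adj u₁ z → z = v := fun z h =>
    (degree_eq_one_iff_existsUnique_adj.mp hd₁).unique h hvu₁.symm
  have hu₂ : ∀ z, G.Adj u₂ z → z = v := fun z h =>
    (degree_eq_one_iff_existsUnique_adj.mp hd₂).unique h hvu₂.symm
  obtain ⟨x₁, x₂, hx, hvx₁, hvx₂, hH⟩ := exists_pair_of_two_end_neighbors hdeg hadj hne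
    hvu₁ hvu₂ hu₁ hu₂ (hnine v u₁ hvu₁ hu₁)
  set H := G.isolatedFinset (G.closedNeighborFinset v)ᶜ
  have hH5 : 5 ≤ H.card := by
    have : 9 ≤ G.degree v + H.card := hnine v u₁ hvu₁ hu₁
    have := hdeg v
    omega
  have hc : ∀ x, G.Adj v x → (G.neighborFinset x ∩ H).card < H.card := fun x hvx => by
    have : (G.neighborFinset x ∩ H).card < G.degree x := card_neighborFinset_inter_lt_degree
      hvx.symm (self_notMem_isolatedFinset_compl_closedNeighborFinset v)
    have := hdeg x
    omega
  have h₁ := card_neighborFinset_inter_le_two hdeg hadj hnine hx hH (hc x₁ hvx₁) (hc x₂ hvx₂)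
  have h₂ := card_neighborFinset_inter_le_two hdeg hadj hnine hx.symm
    (fun w hw z hz => (hH w hw z hz).symm) (hc x₂ hvx₂) (hc x₁ hvx₁)
  have := card_le_card_neighborFinset_inter_add hadj hH
  omega

/-- Claim about a minimum counterexample to Theorem 1'. -/
theorem claim2_no_two_endvertices_share_neighbor
    {V : Type*} [Fintype V] (G : SimpleGraph V) [DecidableRel G.Adj]
    (hconn : G.Connected) (hdeg : ∀ v, G.degree v ≤ 4)
    (hC25 : ¬ Nonempty (G ≃g C25))
    (hsmall : (strongMatchingNumber G : ℚ) < (Fintype.card V : ℚ) / 9)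
    (hmin : ∀ s : Finset V, s ⊂ Finset.univ →
      ((s.card : ℚ) - (isolatedCount (G.induce (↑s : Set V)) : ℚ)) / 9 ≤
        strongMatchingNumber (G.induce (↑s : Set V))) :
    ∀ u₁ u₂ v : V, u₁ ≠ u₂ → G.degree u₁ = 1 → G.degree u₂ = 1 →
      G.Adj v u₁ → G.Adj v u₂ → False :=
  claim2_no_two_endvertices_share_neighbor_general G hconn hdeg hsmall hmin
end

section
/- The strong matching number of C_{2,5} equals 1, and the strong matching number of K_{3,3}^+ equals 1. Moreover C_{2,5} is 4-regular and K_{3,3}^+ has maximum degree 3. -/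
open SimpleGraph

/-- Boolean adjacency of `K_{3,3}^+`: `K_{3,3}` on `Fin 3 ⊕ Fin 3` with the edge between
`inl 0` and `inr 0` subdivided by the new vertex `none`. -/
def K33plusAdj : Option (Fin 3 ⊕ Fin 3) → Option (Fin 3 ⊕ Fin 3) → Bool
  | some (.inl i), some (.inr j) => !(i == 0 && j == 0)
  | some (.inr j), some (.inl i) => !(i == 0 && j == 0)
  | none, some (.inl i) => i == 0
  | some (.inl i), none => i == 0
  | none, some (.inr j) => j == 0
  | some (.inr j), none => j == 0
  | _, _ => false

/-- `K_{3,3}^+`: the graph obtained from `K_{3,3}` by subdividing one edge by a new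
vertex. -/
def K33plus : SimpleGraph (Option (Fin 3 ⊕ Fin 3)) where
  Adj x y := K33plusAdj x y
  symm := ⟨by intro x y; revert x y; decide⟩
  loopless := ⟨by intro x; revert x; decide⟩

instance : DecidableRel K33plus.Adj :=
  fun x y => inferInstanceAs (Decidable (K33plusAdj x y = true))

instance : DecidableRel C25.Adj :=
  fun x y => inferInstanceAs (Decidable (_ ∨ _))

/-!
Both graphs have an edge, and in both any two edges share a vertex or are joined by an edge,
so no two distinct edges form an induced matching.
-/

/-- The endpoints are listed, rather than read off `s(a, b)`, so that the condition is decidable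
on a finite graph. -/
def SimpleGraph.EdgesPairwiseClose {V : Type*} (G : SimpleGraph V) : Prop :=
  ∀ ⦃a b c d : V⦄, G.Adj a b → G.Adj c d → ∃ x ∈ [a, b], ∃ y ∈ [c, d], x = y ∨ G.Adj x y

namespace IsInducedMatching

variable {V : Type*} {G : SimpleGraph V}

lemma singleton {e : Sym2 V} (he : e ∈ G.edgeSet) : IsInducedMatching G {e} := by
  refine ⟨by simpa using he, fun e₁ he₁ e₂ he₂ hne => ?_⟩
  rw [Finset.mem_singleton] at he₁ he₂
  exact absurd (he₁.trans he₂.symm) hne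

lemma card_le_one {M : Finset (Sym2 V)} (hM : IsInducedMatching G M)
    (hG : G.EdgesPairwiseClose) : M.card ≤ 1 := by
  refine Finset.card_le_one.mpr fun e he f hf => by_contra fun hef => ?_
  induction e using Sym2.ind with | _ a b =>
  induction f using Sym2.ind with | _ c d =>
  obtain ⟨x, hx, y, hy, hxy⟩ := hG (hM.1 he) (hM.1 hf)
  have hx : x ∈ s(a, b) := by simpa using hx
  have hy : y ∈ s(c, d) := by simpa using hy
  obtain ⟨hne, hnadj⟩ := hM.2 _ he _ hf hef x hx y hy
  exact hxy.elim hne hnadj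

end IsInducedMatching

lemma strongMatchingNumber_eq_one {V : Type*} [Fintype V] {G : SimpleGraph V} {u v : V}
    (huv : G.Adj u v) (hG : G.EdgesPairwiseClose) : strongMatchingNumber G = 1 := by
  refine IsGreatest.csSup_eq ⟨⟨{s(u, v)}, .singleton huv, rfl⟩, ?_⟩
  rintro _ ⟨M, hM, rfl⟩
  exact hM.card_le_one hG

lemma C25_edgesPairwiseClose : C25.EdgesPairwiseClose := by
  unfold EdgesPairwiseClose
  decide

lemma K33plus_edgesPairwiseClose : K33plus.EdgesPairwiseClose := by
  unfold EdgesPairwiseClose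
  decide

/-- `ν_s(C_{2,5}) = ν_s(K_{3,3}^+) = 1`; moreover `C_{2,5}` is 4-regular and `K_{3,3}^+`
has maximum degree 3. -/
theorem strongMatchingNumber_C25_K33plus :
    strongMatchingNumber C25 = 1 ∧ strongMatchingNumber K33plus = 1 ∧
    (∀ v, C25.degree v = 4) ∧ K33plus.maxDegree = 3 :=
  ⟨strongMatchingNumber_eq_one (show C25.Adj (0, 0) (1, 0) by decide) C25_edgesPairwiseClose,
    strongMatchingNumber_eq_one (show K33plus.Adj none (some (.inl 0)) by decide)
      K33plus_edgesPairwiseClose,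
    by decide, by decide⟩
end
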